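/- Let Z be the Randers norm with Zermelo data (⟨·,·⟩, W) on a finite-dimensional real inner product space V, where ‖W‖ < 1. Suppose v ∈ V with v ≠ 0 and w̃ ∈ V with w̃ ≠ 0 are such that g_v(v,u) = ⟨w̃, u⟩ for all u ∈ V. Then Z(v) = ‖w̃‖ + ⟨w̃, W⟩. -/

import Mathlib

/-! Since `Z` is positively homogeneous, Euler's identity for `Z²` gives `g_v(v, ·) = Z(v) dZ_v`.
Differentiating the Zermelo identity `‖x - Z(x) W‖² = Z(x)²` at `v` gives
`dZ_v = ⟪v - Z(v) W, ·⟫ / Q` with `Q = Z(v) + ⟪v - Z(v) W, W⟫ > 0`. Hence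
`w̃ = (Z(v) / Q) (v - Z(v) W)`, and as `‖v - Z(v) W‖ = Z(v)`,
`‖w̃‖ + ⟪w̃, W⟫ = (Z(v) / Q) (Z(v) + ⟪v - Z(v) W, W⟫) = Z(v)`. -/

open scoped RealInnerProductSpace
open Classical

/-- The Randers norm with Zermelo data `(⟪·,·⟫, W)` on a real inner product space:
`Z(0) = 0` and, for `v ≠ 0`,
`Z(v) = (√(⟪W,v⟫² + (1 − ‖W‖²)‖v‖²) − ⟪W,v⟫)/(1 − ‖W‖²)`. -/
noncomputable def randers {V : Type*} [NormedAddCommGroup V] [InnerProductSpace ℝ V]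
    (W : V) (v : V) : ℝ :=
  if v = 0 then 0
  else (Real.sqrt (⟪W, v⟫ ^ 2 + (1 - ‖W‖ ^ 2) * ‖v‖ ^ 2) - ⟪W, v⟫) / (1 - ‖W‖ ^ 2)

/-- The fundamental tensor of a (Minkowski) norm `F` at the point `v`, evaluated on the
pair of vectors `(u, w)`: one half of the second Fréchet derivative of `F²` at `v`. -/
noncomputable def fundamentalTensor {V : Type*} [NormedAddCommGroup V] [NormedSpace ℝ V]
    (F : V → ℝ) (v u w : V) : ℝ :=
  (1 / 2) * iteratedFDeriv ℝ 2 (fun x => F x ^ 2) v ![u, w]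

section Homogeneous

variable {E F : Type*} [NormedAddCommGroup E] [NormedSpace ℝ E] [NormedAddCommGroup F]
  [NormedSpace ℝ F] {f : E → F}

theorem fderiv_smul_of_sq_homogeneous (hf : ∀ t : ℝ, 0 < t → ∀ x, f (t • x) = t ^ 2 • f x)
    {t : ℝ} (ht : 0 < t) (x : E) : fderiv ℝ f (t • x) = t • fderiv ℝ f x := by
  have h : t • fderiv ℝ f (t • x) = t • (t • fderiv ℝ f x) := by
    rw [← fderiv_comp_smul, smul_smul, ← sq, show (fun y => f (t • y)) = t ^ 2 • f from
      funext (hf t ht), fderiv_const_smul_field]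
    rfl
  exact smul_right_injective _ ht.ne' h

theorem fderiv_fderiv_apply_self_of_sq_homogeneous
    (hf : ∀ t : ℝ, 0 < t → ∀ x, f (t • x) = t ^ 2 • f x) {v : E}
    (hdiff : DifferentiableAt ℝ (fderiv ℝ f) v) :
    fderiv ℝ (fderiv ℝ f) v v = fderiv ℝ f v := by
  have hray : HasDerivAt (fun t : ℝ => t • v) v 1 := by
    simpa using (hasDerivAt_id (1 : ℝ)).smul_const v
  have hchain : HasDerivAt (fun t : ℝ => fderiv ℝ f (t • v)) (fderiv ℝ (fderiv ℝ f) v v) 1 :=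
    hdiff.hasFDerivAt.comp_hasDerivAt_of_eq 1 hray (one_smul ℝ v).symm
  have hlinear : HasDerivAt (fun t : ℝ => fderiv ℝ f (t • v)) (fderiv ℝ f v) 1 := by
    refine ((hasDerivAt_id (1 : ℝ)).smul_const (fderiv ℝ f v)).congr_of_eventuallyEq ?_
      |>.congr_deriv (one_smul _ _)
    filter_upwards [Ioi_mem_nhds one_pos] with t ht
    exact fderiv_smul_of_sq_homogeneous hf ht v
  exact hchain.unique hlinear

end Homogeneous

theorem fundamentalTensor_self_left {E : Type*} [NormedAddCommGroup E] [NormedSpace ℝ E]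
    {F : E → ℝ} (hF : ∀ t : ℝ, 0 < t → ∀ x, F (t • x) = t * F x) {v : E}
    (hC2 : ContDiffAt ℝ 2 F v) (u : E) :
    fundamentalTensor F v v u = F v * fderiv ℝ F v u := by
  have hsq : ∀ t : ℝ, 0 < t → ∀ x, F (t • x) ^ 2 = t ^ 2 • F x ^ 2 := by
    intro t ht x
    rw [hF t ht, smul_eq_mul, mul_pow]
  have hdiff : DifferentiableAt ℝ (fderiv ℝ (fun x => F x ^ 2)) v :=
    ((hC2.pow 2).fderiv_right (m := 1) le_rfl).differentiableAt one_ne_zero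
  have hD : fderiv ℝ (fun x => F x ^ 2) v u = 2 * F v * fderiv ℝ F v u := by
    simp [((hC2.differentiableAt two_ne_zero).hasFDerivAt.pow 2).fderiv]
  rw [fundamentalTensor, iteratedFDeriv_two_apply]
  simp only [Matrix.cons_val_zero, Matrix.cons_val_one]
  rw [fderiv_fderiv_apply_self_of_sq_homogeneous hsq hdiff, hD]
  ring

lemma one_sub_norm_sq_pos {E : Type*} [SeminormedAddCommGroup E] {w : E} (hw : ‖w‖ < 1) :
    0 < 1 - ‖w‖ ^ 2 :=
  sub_pos.2 (pow_lt_one₀ (norm_nonneg w) hw two_ne_zero)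

section Randers

variable {V : Type*} [NormedAddCommGroup V] [InnerProductSpace ℝ V] {W : V}

theorem randers_smul (W : V) {t : ℝ} (ht : 0 ≤ t) (x : V) :
    randers W (t • x) = t * randers W x := by
  rcases ht.eq_or_lt with rfl | ht
  · simp [randers]
  by_cases hx : x = 0
  · simp [randers, hx]
  have hsqrt : (⟪W, t • x⟫ ^ 2 + (1 - ‖W‖ ^ 2) * ‖t • x‖ ^ 2).sqrt
      = t * (⟪W, x⟫ ^ 2 + (1 - ‖W‖ ^ 2) * ‖x‖ ^ 2).sqrt := by
    rw [real_inner_smul_right, norm_smul, Real.norm_of_nonneg ht.le, ← Real.sqrt_sq ht.le,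
      ← Real.sqrt_mul (sq_nonneg t), Real.sqrt_sq ht.le]
    ring_nf
  rw [randers, if_neg (smul_ne_zero ht.ne' hx), randers, if_neg hx, hsqrt,
    real_inner_smul_right]
  ring

lemma inner_sq_lt_randers_radicand (hW : ‖W‖ < 1) {x : V} (hx : x ≠ 0) :
    ⟪W, x⟫ ^ 2 < ⟪W, x⟫ ^ 2 + (1 - ‖W‖ ^ 2) * ‖x‖ ^ 2 :=
  lt_add_of_pos_right _ (mul_pos (one_sub_norm_sq_pos hW) (by positivity))

theorem randers_pos (hW : ‖W‖ < 1) {x : V} (hx : x ≠ 0) : 0 < randers W x := by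
  have hp : ⟪W, x⟫ < (⟪W, x⟫ ^ 2 + (1 - ‖W‖ ^ 2) * ‖x‖ ^ 2).sqrt :=
    (le_abs_self _).trans_lt (Real.sqrt_sq_eq_abs ⟪W, x⟫ ▸
      Real.sqrt_lt_sqrt (sq_nonneg _) (inner_sq_lt_randers_radicand hW hx))
  rw [randers, if_neg hx]
  exact div_pos (sub_pos.2 hp) (one_sub_norm_sq_pos hW)

/-- The Zermelo characterization `‖x / Z(x) - W‖ = 1`, cleared of denominators. -/
theorem norm_sub_randers_smul (hW : ‖W‖ < 1) (x : V) :
    ‖x - randers W x • W‖ = randers W x := by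
  by_cases hx : x = 0
  · simp [randers, hx]
  set Z := randers W x with hZ_def
  set a := 1 - ‖W‖ ^ 2
  set p := ⟪W, x⟫ with hp_def
  set Q := (p ^ 2 + a * ‖x‖ ^ 2).sqrt
  have ha : 0 < a := one_sub_norm_sq_pos hW
  have hZ : a * Z = Q - p := by
    rw [hZ_def, randers, if_neg hx]
    exact mul_div_cancel₀ _ ha.ne'
  have hQ : Q ^ 2 = p ^ 2 + a * ‖x‖ ^ 2 :=
    Real.sq_sqrt ((sq_nonneg p).trans (inner_sq_lt_randers_radicand hW hx).le)
  have hsq : a * (‖x - Z • W‖ ^ 2 - Z ^ 2) = 0 := by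
    rw [norm_sub_sq_real, real_inner_smul_right, norm_smul, real_inner_comm, mul_pow,
      Real.norm_eq_abs, sq_abs, ← hp_def]
    linear_combination (-(a * Z + Q + p)) * hZ - hQ
  rw [← pow_left_inj₀ (norm_nonneg _) (randers_pos hW hx).le two_ne_zero]
  linear_combination (mul_eq_zero.1 hsq).resolve_left ha.ne'

theorem contDiffAt_randers (hW : ‖W‖ < 1) {x : V} (hx : x ≠ 0) {n : WithTop ℕ∞} :
    ContDiffAt ℝ n (randers W) x := by
  have hdiscr : ContDiff ℝ n (fun y : V => ⟪W, y⟫ ^ 2 + (1 - ‖W‖ ^ 2) * ‖y‖ ^ 2) :=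
    ((innerSL ℝ W).contDiff.pow 2).add (contDiff_const.mul (contDiff_norm_sq ℝ))
  have hformula : ContDiffAt ℝ n (fun y : V =>
      ((⟪W, y⟫ ^ 2 + (1 - ‖W‖ ^ 2) * ‖y‖ ^ 2).sqrt - ⟪W, y⟫) / (1 - ‖W‖ ^ 2)) x :=
    ((hdiscr.contDiffAt.sqrt
      ((sq_nonneg _).trans_lt (inner_sq_lt_randers_radicand hW hx)).ne').sub
        (innerSL ℝ W).contDiff.contDiffAt).div_const _
  refine hformula.congr_of_eventuallyEq ?_
  filter_upwards [isOpen_ne.mem_nhds hx] with y hy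
  simp [randers, hy]

theorem randers_add_inner_sub_pos (hW : ‖W‖ < 1) {x : V} (hx : x ≠ 0) :
    0 < randers W x + ⟪x - randers W x • W, W⟫ := by
  have hZ := randers_pos hW hx
  have hcs := neg_le_of_abs_le (abs_real_inner_le_norm (x - randers W x • W) W)
  rw [norm_sub_randers_smul hW] at hcs
  nlinarith

theorem hasFDerivAt_randers (hW : ‖W‖ < 1) {x : V} (hx : x ≠ 0) :
    HasFDerivAt (randers W)
      ((randers W x + ⟪x - randers W x • W, W⟫)⁻¹ • innerSL ℝ (x - randers W x • W)) x := by
  set Z := randers W x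
  set L := fderiv ℝ (randers W) x
  have hL : HasFDerivAt (randers W) L x :=
    ((contDiffAt_randers hW hx (n := 1)).differentiableAt one_ne_zero).hasFDerivAt
  have hlhs : HasFDerivAt (fun y => ‖y - randers W y • W‖ ^ 2)
      (2 • (innerSL ℝ (x - Z • W)).comp (ContinuousLinearMap.id ℝ V - L.smulRight W)) x :=
    ((hasFDerivAt_id x).sub (hL.smul_const W)).norm_sq
  simp only [norm_sub_randers_smul hW] at hlhs
  have hL_apply : ∀ u, L u * (Z + ⟪x - Z • W, W⟫) = ⟪x - Z • W, u⟫ := by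
    intro u
    have := congrArg (· u) (hlhs.unique (hL.pow 2))
    simp only [smul_apply, ContinuousLinearMap.comp_apply, sub_apply,
      ContinuousLinearMap.id_apply, ContinuousLinearMap.smulRight_apply, innerSL_apply_apply,
      inner_sub_right, real_inner_smul_right, nsmul_eq_mul, smul_eq_mul, Nat.cast_ofNat,
      Nat.reduceSub, pow_one] at this
    linear_combination -this / 2
  convert hL using 1
  ext u
  rw [smul_apply, innerSL_apply_apply, smul_eq_mul,
    inv_mul_eq_iff_eq_mul₀ (randers_add_inner_sub_pos hW hx).ne', mul_comm]
  exact (hL_apply u).symm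

end Randers

theorem randers_norm_of_gradient_general {V : Type*} [NormedAddCommGroup V]
    [InnerProductSpace ℝ V] (W : V) (hW : ‖W‖ < 1)
    (v : V) (hv : v ≠ 0) (wt : V)
    (hgrad : ∀ u : V, fundamentalTensor (randers W) v v u = ⟪wt, u⟫) :
    randers W v = ‖wt‖ + ⟪wt, W⟫ := by
  set Z := randers W v
  set Q := Z + ⟪v - Z • W, W⟫
  have hQ : 0 < Q := randers_add_inner_sub_pos hW hv
  have hwt : wt = (Z / Q) • (v - Z • W) := by
    refine ext_inner_right ℝ fun u => ?_
    rw [← hgrad u, fundamentalTensor_self_left (fun t ht => randers_smul W ht.le)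
      (contDiffAt_randers hW hv), (hasFDerivAt_randers hW hv).fderiv, real_inner_smul_left,
      smul_apply, innerSL_apply_apply, smul_eq_mul]
    ring
  rw [hwt, norm_smul, real_inner_smul_left, norm_sub_randers_smul hW,
    Real.norm_of_nonneg (div_pos (randers_pos hW hv) hQ).le, ← mul_add]
  exact (div_mul_cancel₀ Z hQ.ne').symm

/-- If `v ≠ 0` is the `Z`-gradient of the covector `⟪w̃, ·⟫` with `w̃ ≠ 0` (that is,
`g_v(v,u) = ⟪w̃,u⟫` for all `u`), then `Z(v) = ‖w̃‖ + ⟪w̃, W⟫`. -/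
theorem randers_norm_of_gradient {V : Type*} [NormedAddCommGroup V]
    [InnerProductSpace ℝ V] [FiniteDimensional ℝ V] (W : V) (hW : ‖W‖ < 1)
    (v : V) (hv : v ≠ 0) (wt : V) (hwt : wt ≠ 0)
    (hgrad : ∀ u : V, fundamentalTensor (randers W) v v u = ⟪wt, u⟫) :
    randers W v = ‖wt‖ + ⟪wt, W⟫ :=
  randers_norm_of_gradient_general W hW v hv wt hgrad
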